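/- Let Γ be a MaxSAT instance encoded with blocking variables with cost(Γ) = k, and let A be the set of optimal total assignments for Γ (those α with α ⊨ Γ and cost(α) = k). Suppose (1) every two distinct assignments in A have Hamming distance at least d, and (2) for every blocking variable b there exist α, β ∈ A with α(b)=0 and β(b)=1. Then every cost-SR derivation from Γ that contains a unit clause b for some blocking variable b must contain a clause C derived by the cost-SR rule whose witnessing substitution σ satisfies flip(C,σ) ≥ d. -/

import Mathlib

namespace PaperMaxSAT

/-- Variables are natural numbers. -/
abbrev Var := ℕ

/-- A literal is a variable together with a polarity. -/
abbrev Lit := Var × Bool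

/-- Negation of a literal. -/
def negLit (l : Lit) : Lit := (l.1, !l.2)

/-- A clause is a finite set of literals. -/
abbrev Clause := Finset Lit

/-- A CNF formula is a finite multiset of clauses. -/
abbrev CNF := Multiset Clause

/-- A tautological clause contains a literal together with its negation. -/
def isTaut (C : Clause) : Prop := ∃ l ∈ C, negLit l ∈ C

/-- The value of a substitution at a variable: a Boolean constant or a literal. -/
abbrev SubVal := Bool ⊕ Lit

/-- Negation on substitution values. -/
def negSV : SubVal → SubVal
  | .inl b => .inl !b
  | .inr l => .inr (negLit l)

/-- A substitution maps each variable to `0`, `1` or a literal. -/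
abbrev Sub := Var → SubVal

/-- Applying a substitution to a literal, respecting `σ(¬x) = ¬σ(x)`. -/
def appLit (σ : Sub) (l : Lit) : SubVal :=
  if l.2 then σ l.1 else negSV (σ l.1)

/-- The identity substitution. -/
def idSub : Sub := fun v => .inr (v, true)

/-- `σ(C) = 1` : some literal of `C` is mapped to true by `σ`. -/
def clauseTrue (σ : Sub) (C : Clause) : Prop := ∃ l ∈ C, appLit σ l = Sum.inl true

instance (σ : Sub) (C : Clause) : Decidable (clauseTrue σ C) := by
  unfold clauseTrue; infer_instance

/-- `C↾σ` : the clause whose literals are the images under `σ` of the literals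
of `C` mapped to literals (literals mapped to `0` are dropped). -/
def restrictClause (σ : Sub) (C : Clause) : Clause :=
  C.biUnion (fun l => match appLit σ l with
    | .inr m => {m}
    | _ => (∅ : Clause))

/-- `Γ↾σ` : restrict every clause of `Γ`; clauses mapped to `1` are removed. -/
def restrictCNF (σ : Sub) (Γ : CNF) : CNF :=
  (Γ.filter (fun C => ¬ clauseTrue σ C)).map (restrictClause σ)

/-- `σ ⊨ C` : `σ(C) = 1` or `σ(C)` is tautological. -/
def subSat (σ : Sub) (C : Clause) : Prop :=
  clauseTrue σ C ∨ isTaut (restrictClause σ C)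

/-- The assignment `¬C`, setting all literals of `C` to false. -/
def negSub (C : Clause) : Sub := fun v =>
  if (v, true) ∈ C then .inl false
  else if (v, false) ∈ C then .inl true
  else .inr (v, true)

/-- The substitution setting the literal `l` to true and touching nothing else. -/
def litSub (l : Lit) : Sub := fun v => if v = l.1 then .inl l.2 else .inr (v, true)

/-- Unit propagation derives the empty clause. -/
inductive UPFalse : CNF → Prop
  | empty {Γ : CNF} : (∅ : Clause) ∈ Γ → UPFalse Γ
  | step {Γ : CNF} (l : Lit) : ({l} : Clause) ∈ Γ →
      UPFalse (restrictCNF (litSub l) Γ) → UPFalse Γ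

/-- The unit clauses `¬l` for `l ∈ C`. -/
def negUnits (C : Clause) : CNF := C.val.map (fun l => ({negLit l} : Clause))

/-- `Γ ⊢₁ C` : unit propagation on `Γ↾¬C` produces the empty clause. -/
def UPimplies (Γ : CNF) (C : Clause) : Prop := UPFalse (Γ + negUnits C)

/-- `Γ ⊢₁ Δ` : `Γ ⊢₁ D` for every `D ∈ Δ`. -/
def UPimpliesAll (Γ Δ : CNF) : Prop := ∀ D ∈ Δ, UPimplies Γ D

/-- Total assignments. -/
abbrev TAssign := Var → Bool

/-- A total assignment satisfies a clause. -/
def satC (α : TAssign) (C : Clause) : Prop := ∃ l ∈ C, α l.1 = l.2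

instance (α : TAssign) (C : Clause) : Decidable (satC α C) := by
  unfold satC; infer_instance

/-- A total assignment satisfies a CNF. -/
def satCNF (α : TAssign) (Γ : CNF) : Prop := ∀ C ∈ Γ, satC α C

/-- `τ ∘ σ` : composition of a total assignment with a substitution. -/
def comp (τ : TAssign) (σ : Sub) : TAssign := fun v =>
  match σ v with
  | .inl b => b
  | .inr l => if l.2 then τ l.1 else !(τ l.1)

/-- `τ` extends the assignment `¬C`. -/
def extendsNeg (τ : TAssign) (C : Clause) : Prop := ∀ l ∈ C, τ l.1 = !l.2

/-- The cost of a total assignment w.r.t. a set `B` of blocking variables: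
the number of blocking variables set to true. -/
def cost (B : Finset Var) (α : TAssign) : ℕ := (B.filter (fun b => α b = true)).card

/-- The cost of a MaxSAT instance encoded with blocking variables `B`:
the minimum cost of a satisfying total assignment. -/
noncomputable def costCNF (B : Finset Var) (Γ : CNF) : ℕ :=
  sInf {k | ∃ α : TAssign, satCNF α Γ ∧ cost B α = k}

/-- `σ` witnesses that `C` is cost-SR w.r.t. `Γ` (with blocking variables `B`):
the redundancy condition `Γ↾¬C ⊢₁ (Γ ∪ {C})↾σ` and the cost condition. -/
def CostSRwit (B : Finset Var) (Γ : CNF) (C : Clause) (σ : Sub) : Prop :=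
  UPimpliesAll (restrictCNF (negSub C) Γ) (restrictCNF σ (C ::ₘ Γ)) ∧
  ∀ τ : TAssign, extendsNeg τ C → cost B (comp τ σ) ≤ cost B τ

/-- `C` is cost-SR w.r.t. `Γ`. -/
def CostSR (B : Finset Var) (Γ : CNF) (C : Clause) : Prop := ∃ σ, CostSRwit B Γ C σ

/-- A substitution which is an assignment: every value is `0`, `1`,
or the variable itself. -/
def isAssign (σ : Sub) : Prop :=
  ∀ v, σ v = .inl true ∨ σ v = .inl false ∨ σ v = .inr (v, true)

/-- The variables of a clause. -/
def varsClause (C : Clause) : Finset Var := C.image Prod.fst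

/-- The variables of a CNF. -/
def varsCNF (Γ : CNF) : Finset Var := (Γ.map varsClause).sup

/-- Membership in the domain of an assignment. -/
def subDom (σ : Sub) (v : Var) : Prop := ∃ b : Bool, σ v = .inl b

/-- `C` is cost-PR w.r.t. `Γ`: cost-SR witnessed by an assignment. -/
def CostPR (B : Finset Var) (Γ : CNF) (C : Clause) : Prop :=
  ∃ σ, CostSRwit B Γ C σ ∧ isAssign σ

/-- `C` is cost-SPR w.r.t. `Γ`: cost-SR witnessed by an assignment with
domain `dom(¬C) = Var(C)`. -/
def CostSPR (B : Finset Var) (Γ : CNF) (C : Clause) : Prop :=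
  ∃ σ, CostSRwit B Γ C σ ∧ isAssign σ ∧ (∀ v, subDom σ v ↔ v ∈ varsClause C)

/-- `C` is cost-LPR w.r.t. `Γ`: cost-SR witnessed by an assignment with
domain `dom(¬C)` differing from `¬C` on exactly one variable. -/
def CostLPR (B : Finset Var) (Γ : CNF) (C : Clause) : Prop :=
  ∃ σ, CostSRwit B Γ C σ ∧ isAssign σ ∧ (∀ v, subDom σ v ↔ v ∈ varsClause C) ∧
    ((varsClause C).filter (fun v => σ v ≠ negSub C v)).card = 1

/-- `D` is a resolvent of `E₁` and `E₂`. -/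
def resolvent (D E₁ E₂ : Clause) : Prop :=
  ∃ x : Var, (x, true) ∈ E₁ ∧ (x, false) ∈ E₂ ∧
    D = E₁.erase (x, true) ∪ E₂.erase (x, false)

/-- A derivation from `Γ` in the calculus with redundancy rule `Red`:
every clause of the list is in `Γ`, a weakening of an earlier clause,
a resolvent of two earlier clauses, or redundant (w.r.t. `Red`) relative to
`Γ` together with the earlier clauses, using no new variables. -/
def IsDeriv (Red : Finset Var → CNF → Clause → Prop) (B : Finset Var) (Γ : CNF)
    (L : List Clause) : Prop :=
  ∀ i, ∀ hi : i < L.length,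
    L[i] ∈ Γ ∨
    (∃ j, ∃ hj : j < i, L[j]'(hj.trans hi) ⊆ L[i]) ∨
    (∃ j k, ∃ hj : j < i, ∃ hk : k < i,
      resolvent L[i] (L[j]'(hj.trans hi)) (L[k]'(hk.trans hi))) ∨
    (Red B (Γ + (↑(L.take i) : CNF)) L[i] ∧ varsClause L[i] ⊆ varsCNF Γ)

/-- `C ∨ ℓ` is a cost blocked clause (cost-BC) w.r.t. `Γ` and `ℓ`. -/
def CostBC (B : Finset Var) (Γ : CNF) (C : Clause) (l : Lit) : Prop :=
  (∀ D ∈ Γ, negLit l ∈ D → isTaut (C ∪ D.erase (negLit l))) ∧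
  ¬(l.2 = true ∧ l.1 ∈ B)

/-- Hamming distance between two total assignments, over the variables in `V`. -/
def HD (V : Finset Var) (α β : TAssign) : ℕ := (V.filter (fun v => α v ≠ β v)).card

/-- `flip(C, σ) ≥ d` : some total assignment `τ` extending `¬C` has
Hamming distance (over `V`) at least `d` from `τ ∘ σ`. -/
def flipGE (V : Finset Var) (C : Clause) (σ : Sub) (d : ℕ) : Prop :=
  ∃ τ : TAssign, extendsNeg τ C ∧ d ≤ HD V τ (comp τ σ)


section Aux

lemma mem_restrictClause {σ : Sub} {C : Clause} {m : Lit} :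
    m ∈ restrictClause σ C ↔ ∃ l ∈ C, appLit σ l = .inr m := by
  unfold restrictClause
  simp only [Finset.mem_biUnion]
  constructor
  · rintro ⟨l, hl, hm⟩
    refine ⟨l, hl, ?_⟩
    rcases h : appLit σ l with b | m'
    · rw [h] at hm; simp at hm
    · rw [h] at hm; simp at hm; rw [hm]
  · rintro ⟨l, hl, h⟩
    exact ⟨l, hl, by rw [h]; simp⟩

lemma comp_lit (α : TAssign) (σ : Sub) (l : Lit) :
    (comp α σ l.1 = l.2) ↔
      (appLit σ l = .inl true ∨ ∃ m, appLit σ l = .inr m ∧ α m.1 = m.2) := by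
  obtain ⟨v, p⟩ := l
  unfold comp appLit negSV negLit
  rcases h : σ v with b | ⟨w, q⟩
  · cases p <;> cases b <;> simp [h]
  · cases p <;> cases q <;> cases hw : α w <;> simp [h, hw]

lemma satC_comp (α : TAssign) (σ : Sub) (C : Clause) :
    satC (comp α σ) C ↔ clauseTrue σ C ∨ satC α (restrictClause σ C) := by
  unfold satC clauseTrue
  constructor
  · rintro ⟨l, hl, hv⟩
    rcases (comp_lit α σ l).1 hv with h | ⟨m, hm, hαm⟩
    · exact Or.inl ⟨l, hl, h⟩
    · exact Or.inr ⟨m, mem_restrictClause.2 ⟨l, hl, hm⟩, hαm⟩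
  · rintro (⟨l, hl, h⟩ | ⟨m, hm, hαm⟩)
    · exact ⟨l, hl, (comp_lit α σ l).2 (Or.inl h)⟩
    · obtain ⟨l, hl, hm⟩ := mem_restrictClause.1 hm
      exact ⟨l, hl, (comp_lit α σ l).2 (Or.inr ⟨m, hm, hαm⟩)⟩

lemma satCNF_restrict_iff (α : TAssign) (σ : Sub) (Δ : CNF) :
    satCNF α (restrictCNF σ Δ) ↔ satCNF (comp α σ) Δ := by
  unfold satCNF restrictCNF
  constructor
  · intro h C hC
    rw [satC_comp]
    by_cases ht : clauseTrue σ C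
    · exact Or.inl ht
    · exact Or.inr (h _ (Multiset.mem_map.2 ⟨C, Multiset.mem_filter.2 ⟨hC, ht⟩, rfl⟩))
  · intro h D hD
    obtain ⟨C, hC, rfl⟩ := Multiset.mem_map.1 hD
    obtain ⟨hCΔ, ht⟩ := Multiset.mem_filter.1 hC
    rcases (satC_comp α σ C).1 (h _ hCΔ) with h' | h'
    · exact absurd h' ht
    · exact h'

lemma comp_litSub (α : TAssign) {l : Lit} (h : α l.1 = l.2) :
    comp α (litSub l) = α := by
  funext v
  unfold comp litSub
  by_cases hv : v = l.1 <;> simp [hv, h.symm]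

lemma UPFalse_not_sat {Δ : CNF} (h : UPFalse Δ) (α : TAssign) : ¬ satCNF α Δ := by
  induction h with
  | empty hmem =>
    intro hs
    obtain ⟨l, hl, -⟩ := hs _ hmem
    simp at hl
  | step l hmem _ ih =>
    intro hs
    have hl : α l.1 = l.2 := by
      obtain ⟨l', hl', hv⟩ := hs _ hmem
      rw [Finset.mem_singleton] at hl'
      rwa [hl'] at hv
    apply ih
    rw [satCNF_restrict_iff, comp_litSub α hl]
    exact hs

lemma UPimplies_sound {Δ : CNF} {C : Clause} (h : UPimplies Δ C) (α : TAssign)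
    (hΔ : satCNF α Δ) : satC α C := by
  by_contra hC
  apply UPFalse_not_sat h α
  intro D hD
  rcases Multiset.mem_add.1 hD with h1 | h2
  · exact hΔ _ h1
  · rw [negUnits, Multiset.mem_map] at h2
    obtain ⟨l, hl, rfl⟩ := h2
    refine ⟨negLit l, Finset.mem_singleton_self _, ?_⟩
    have hne : ¬ (α l.1 = l.2) := fun hv => hC ⟨l, hl, hv⟩
    unfold negLit
    cases hb : α l.1 <;> cases hl2 : l.2 <;> simp_all

lemma comp_negSub {α : TAssign} {C : Clause} (h : extendsNeg α C) :
    comp α (negSub C) = α := by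
  funext v
  unfold comp negSub
  split_ifs with h1 h2
  · simpa using (h _ h1).symm
  · simpa using (h _ h2).symm
  · rfl

lemma sr_transfer {B : Finset Var} {Γ : CNF} {C : Clause} {σ : Sub}
    (hw : CostSRwit B Γ C σ) {α : TAssign}
    (hext : extendsNeg α C) (hΓ : satCNF α Γ) :
    satCNF (comp α σ) (C ::ₘ Γ) := by
  have hres : satCNF α (restrictCNF (negSub C) Γ) := by
    rw [satCNF_restrict_iff, comp_negSub hext]; exact hΓ
  rw [← satCNF_restrict_iff]
  intro D hD
  exact UPimplies_sound (hw.1 D hD) α hres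

end Aux

/-- if the set `A` of optimal total assignments of `Γ` has
pairwise Hamming distance at least `d` and no blocking variable is constant
on `A`, then any cost-SR derivation from `Γ` containing a unit clause `b`
for some blocking variable `b` must contain a clause derived by the cost-SR
rule whose witnessing substitution `σ` satisfies `flip(C,σ) ≥ d`.
(Hamming distances are measured over the variables of the instance,
`Var(Γ) ∪ B`.) -/
theorem flip_lower_bound (B : Finset Var) (Γ : CNF) (k d : ℕ)
    (hcost : costCNF B Γ = k)
    (hdist : ∀ α β : TAssign, satCNF α Γ → cost B α = k →
      satCNF β Γ → cost B β = k →
      (∃ v ∈ varsCNF Γ ∪ B, α v ≠ β v) → d ≤ HD (varsCNF Γ ∪ B) α β)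
    (hboth : ∀ b ∈ B,
      (∃ α : TAssign, satCNF α Γ ∧ cost B α = k ∧ α b = false) ∧
      (∃ β : TAssign, satCNF β Γ ∧ cost B β = k ∧ β b = true)) :
    ∀ L : List Clause, IsDeriv CostSR B Γ L →
      (∃ b ∈ B, ({(b, true)} : Clause) ∈ L) →
      ∃ i, ∃ hi : i < L.length, ∃ σ : Sub,
        CostSRwit B (Γ + (↑(L.take i) : CNF)) L[i] σ ∧
        flipGE (varsCNF Γ ∪ B) L[i] σ d := by
  classical
  intro L hderiv hunit
  obtain ⟨b, hbB, hbL⟩ := hunit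
  obtain ⟨i0, hi0, he⟩ := List.mem_iff_getElem.1 hbL
  obtain ⟨⟨α0, hα0s, hα0c, hα0b⟩, -⟩ := hboth b hbB
  have hQ : ∃ i, ∃ hi : i < L.length,
      ∃ α : TAssign, satCNF α Γ ∧ cost B α = k ∧ ¬ satC α (L[i]'hi) := by
    refine ⟨i0, hi0, α0, hα0s, hα0c, ?_⟩
    rw [he]
    rintro ⟨l, hl, hv⟩
    rw [Finset.mem_singleton] at hl
    rw [hl] at hv
    simp [hα0b] at hv
  set i := Nat.find hQ with hidef
  obtain ⟨hi, α, hαs, hαc, hαf⟩ := Nat.find_spec hQ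
  have hsatj : ∀ j (hj : j < i), satC α (L[j]'(hj.trans hi)) := by
    intro j hj
    by_contra hc
    exact Nat.find_min hQ hj ⟨hj.trans hi, α, hαs, hαc, hc⟩
  rcases hderiv i hi with hmem | ⟨j, hj, hsub⟩ | ⟨j, k', hj, hk, x, hx1, hx2, heq⟩ |
      ⟨⟨σ, hw⟩, hvars⟩
  · exact absurd (hαs _ hmem) hαf
  · obtain ⟨l, hl, hv⟩ := hsatj j hj
    exact absurd ⟨l, hsub hl, hv⟩ hαf
  · refine absurd ?_ hαf
    cases hαx : α x with
    | false =>
      obtain ⟨l, hl, hv⟩ := hsatj j hj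
      have hlne : l ≠ (x, true) := by
        rintro rfl; rw [hαx] at hv; exact absurd hv (by simp)
      exact ⟨l, heq ▸ Finset.mem_union_left _ (Finset.mem_erase.2 ⟨hlne, hl⟩), hv⟩
    | true =>
      obtain ⟨l, hl, hv⟩ := hsatj k' hk
      have hlne : l ≠ (x, false) := by
        rintro rfl; rw [hαx] at hv; exact absurd hv (by simp)
      exact ⟨l, heq ▸ Finset.mem_union_right _ (Finset.mem_erase.2 ⟨hlne, hl⟩), hv⟩
  · -- cost-SR case
    have hext : extendsNeg α (L[i]'hi) := by
      intro l hl
      have : ¬ (α l.1 = l.2) := fun hv => hαf ⟨l, hl, hv⟩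
      cases hb1 : α l.1 <;> cases hl2 : l.2 <;> simp_all
    have hΓ' : satCNF α (Γ + (↑(L.take i) : CNF)) := by
      intro C hC
      rcases Multiset.mem_add.1 hC with h1 | h2
      · exact hαs _ h1
      · rw [Multiset.mem_coe] at h2
        obtain ⟨j, hjlen, rfl⟩ := List.mem_iff_getElem.1 h2
        have hji : j < i := lt_of_lt_of_le hjlen (by simp [List.length_take])
        have : (L.take i)[j] = L[j]'(hji.trans hi) := List.getElem_take
        rw [this]
        exact hsatj j hji
    set β := comp α σ with hβdef
    have hβall : satCNF β ((L[i]'hi) ::ₘ (Γ + (↑(L.take i) : CNF))) :=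
      sr_transfer hw hext hΓ'
    have hβΓ : satCNF β Γ := fun C hC =>
      hβall C (Multiset.mem_cons_of_mem (Multiset.mem_add.2 (Or.inl hC)))
    have hβC : satC β (L[i]'hi) := hβall _ (Multiset.mem_cons_self _ _)
    have hβle : cost B β ≤ k := hαc ▸ hw.2 α hext
    have hβge : k ≤ cost B β := by
      rw [← hcost]
      exact Nat.sInf_le ⟨β, hβΓ, rfl⟩
    have hβc : cost B β = k := le_antisymm hβle hβge
    obtain ⟨l, hl, hv⟩ := hβC
    have hαl : α l.1 = !l.2 := hext l hl
    have hne : α l.1 ≠ β l.1 := by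
      rw [hαl, hv]; cases l.2 <;> simp
    have hmemv : l.1 ∈ varsCNF Γ ∪ B :=
      Finset.mem_union_left _ (hvars (Finset.mem_image.2 ⟨l, hl, rfl⟩))
    have hd : d ≤ HD (varsCNF Γ ∪ B) α β :=
      hdist α β hαs hαc hβΓ hβc ⟨l.1, hmemv, hne⟩
    exact ⟨i, hi, σ, hw, α, hext, hd⟩

end PaperMaxSAT
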